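/- arXiv:cs/0202033 — 5 statements merged into one kernel-verified Lean document; each statement's English description precedes it below -/
import Mathlib

section
/- Let M be a set of models, L a language, ⊨ a satisfaction relation, Mod(A) = {m : ∀a∈A, m⊨a} and Th(X) = {a : ∀m∈X, m⊨a}. Suppose the union of any two definable sets is definable, i.e., Mod(Th(Mod(A) ∪ Mod(B))) = Mod(A) ∪ Mod(B) for all A, B ⊆ L. Let f satisfy Contraction (f(X) ⊆ X) and Coherence (X ⊆ Y → f(Y) ∩ X ⊆ f(X)), and define C(A) = Th(f(Mod(A))). Then for all A, B ⊆ L: C(A) ∩ C(B) ⊆ C(Th(Mod(A)) ∩ Th(Mod(B))). (Distributivity.) -/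
def ModSet {M L : Type*} (sat : M → L → Prop) (A : Set L) : Set M :=
  {m | ∀ a ∈ A, sat m a}

def ThSet {M L : Type*} (sat : M → L → Prop) (X : Set M) : Set L :=
  {a | ∀ m ∈ X, sat m a}

theorem distributivity {M L : Type*} (sat : M → L → Prop) (f : Set M → Set M)
    (hUnionDef : ∀ A B : Set L,
      ModSet sat (ThSet sat (ModSet sat A ∪ ModSet sat B)) = ModSet sat A ∪ ModSet sat B)
    (hContr : ∀ X : Set M, f X ⊆ X)
    (hCoh : ∀ X Y : Set M, X ⊆ Y → f Y ∩ X ⊆ f X)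
    (C : Set L → Set L) (hC : ∀ A : Set L, C A = ThSet sat (f (ModSet sat A))) :
    ∀ A B : Set L,
      C A ∩ C B ⊆ C (ThSet sat (ModSet sat A) ∩ ThSet sat (ModSet sat B)) := by
  intro A B φ hφ
  rw [hC A] at hφ
  rw [hC B] at hφ
  rw [hC]
  obtain ⟨hA, hB⟩ := hφ
  -- Th(ModA) ∩ Th(ModB) = Th(ModA ∪ ModB)
  have hTh : ThSet sat (ModSet sat A) ∩ ThSet sat (ModSet sat B)
      = ThSet sat (ModSet sat A ∪ ModSet sat B) := by
    ext a
    constructor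
    · rintro ⟨h1, h2⟩ m (hm | hm)
      · exact h1 m hm
      · exact h2 m hm
    · intro h
      exact ⟨fun m hm => h m (Or.inl hm), fun m hm => h m (Or.inr hm)⟩
  rw [hTh, hUnionDef A B]
  intro m hm
  have hmem : m ∈ ModSet sat A ∪ ModSet sat B := hContr _ hm
  rcases hmem with hmA | hmB
  · exact hA m (hCoh (ModSet sat A) _ Set.subset_union_left ⟨hm, hmA⟩)
  · exact hB m (hCoh (ModSet sat B) _ Set.subset_union_right ⟨hm, hmB⟩)
end

section
/- Suppose f satisfies Contraction, Expansion, f(X) ⊆ f(Mod(Th(X))), and the key identity f(Mod(A)) = Mod(C(A)) where C(A) = Th(f(Mod(A))). Then for all A, B ⊆ L: C(Th(Mod(A) ∪ Mod(B))) ⊆ C(C(A) ∪ C(B)). -/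
theorem second_stage {M L : Type*} (sat : M → L → Prop) (f : Set M → Set M)
    (C : Set L → Set L)
    (hC : ∀ A : Set L, C A = ThSet sat (f (ModSet sat A)))
    (hContr : ∀ X : Set M, f X ⊆ X)
    (hExp : ∀ X Y : Set M, f X ∩ f Y ⊆ f (X ∪ Y))
    (hClos : ∀ X : Set M, f X ⊆ f (ModSet sat (ThSet sat X)))
    (hKey : ∀ A : Set L, f (ModSet sat A) = ModSet sat (C A)) :
    ∀ A B : Set L,
      C (ThSet sat (ModSet sat A ∪ ModSet sat B)) ⊆ C (C A ∪ C B) := by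
  intro A B a ha
  -- Mod(C A ∪ C B) = f(Mod A) ∩ f(Mod B)
  have hmod : ModSet sat (C A ∪ C B) = f (ModSet sat A) ∩ f (ModSet sat B) := by
    rw [hKey, hKey]
    ext m
    constructor
    · intro h
      exact ⟨fun x hx => h x (Or.inl hx), fun x hx => h x (Or.inr hx)⟩
    · rintro ⟨h1, h2⟩ x (hx | hx)
      · exact h1 x hx
      · exact h2 x hx
  rw [hC] at ha ⊢
  intro m hm
  -- m ∈ f(Mod(C A ∪ C B)) ⊆ Mod(C A ∪ C B) = fX ∩ fY ⊆ f(X ∪ Y)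
  have hm2 : m ∈ f (ModSet sat A ∪ ModSet sat B) := by
    apply hExp
    rw [← hmod]
    exact hContr _ hm
  -- a ∈ Th(f(Mod(Th(X∪Y)))) ⊆ Th(f(X∪Y))
  exact ha m (hClos _ hm2)
end

section
/- Suppose L has a disjunction connective ∨ with semantics m ⊨ a ∨ b iff m ⊨ a or m ⊨ b, and f satisfies Contraction and Coherence. Define C(A) = Th(f(Mod(A))). Then for all A ⊆ L and a, b ∈ L: C(A ∪ {a}) ∩ C(A ∪ {b}) ⊆ C(A ∪ {a ∨ b}). -/
theorem or_left_intro {M L : Type*} (sat : M → L → Prop) (or : L → L → L)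
    (hor : ∀ (m : M) (a b : L), sat m (or a b) ↔ (sat m a ∨ sat m b))
    (f : Set M → Set M)
    (hContr : ∀ X : Set M, f X ⊆ X)
    (hCoh : ∀ X Y : Set M, X ⊆ Y → f Y ∩ X ⊆ f X)
    (C : Set L → Set L) (hC : ∀ A : Set L, C A = ThSet sat (f (ModSet sat A))) :
    ∀ (A : Set L) (a b : L),
      C (A ∪ {a}) ∩ C (A ∪ {b}) ⊆ C (A ∪ {or a b}) := by
  intro A a b c hc
  simp only [hC] at *
  obtain ⟨hca, hcb⟩ := hc
  intro m hm
  have hmMod : m ∈ ModSet sat (A ∪ {or a b}) := hContr _ hm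
  have hab : sat m a ∨ sat m b := (hor m a b).mp (hmMod (or a b) (Or.inr rfl))
  have hA : ∀ x ∈ A, sat m x := fun x hx => hmMod x (Or.inl hx)
  rcases hab with h | h
  · have hsub : ModSet sat (A ∪ {a}) ⊆ ModSet sat (A ∪ {or a b}) := by
      intro n hn x hx
      rcases hx with hx | hx
      · exact hn x (Or.inl hx)
      · cases hx; exact (hor n a b).mpr (Or.inl (hn a (Or.inr rfl)))
    have : m ∈ f (ModSet sat (A ∪ {a})) :=
      hCoh _ _ hsub ⟨hm, fun x hx => hx.elim (hA x) (fun hx => hx ▸ h)⟩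
    exact hca m this
  · have hsub : ModSet sat (A ∪ {b}) ⊆ ModSet sat (A ∪ {or a b}) := by
      intro n hn x hx
      rcases hx with hx | hx
      · exact hn x (Or.inl hx)
      · cases hx; exact (hor n a b).mpr (Or.inr (hn b (Or.inr rfl)))
    have : m ∈ f (ModSet sat (A ∪ {b})) :=
      hCoh _ _ hsub ⟨hm, fun x hx => hx.elim (hA x) (fun hx => hx ▸ h)⟩
    exact hcb m this
end

section
/- Soundness theorem: Let M be a set of models and ⊨ a satisfaction relation such that the union of any two definable sets of models is definable. Let f : Set M → Set M be definability-preserving and satisfy Contraction, Coherence, Local Monotonicity, Expansion, and f(X) ⊆ f(Mod(Th(X))). Suppose further the operation C(A) = Th(f(Mod(A))) satisfies f(Mod(A)) = Mod(C(A)) and Cumulativity. Then C satisfies property (E): C(⋂{C(F) : F ⊇ A or F ⊇ B}) ⊆ C(C(A) ∪ C(B)) for all A, B ⊆ L. -/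
theorem soundness_E {M L : Type*} (sat : M → L → Prop) (f : Set M → Set M)
    (C : Set L → Set L)
    (hC : ∀ A : Set L, C A = ThSet sat (f (ModSet sat A)))
    (hUnionDef : ∀ A B : Set L,
      ModSet sat (ThSet sat (ModSet sat A ∪ ModSet sat B)) = ModSet sat A ∪ ModSet sat B)
    (hDefPres : ∀ A : Set L, ∃ B : Set L, f (ModSet sat A) = ModSet sat B)
    (hContr : ∀ X : Set M, f X ⊆ X)
    (hCoh : ∀ X Y : Set M, X ⊆ Y → f Y ∩ X ⊆ f X)
    (hLocMon : ∀ X Y : Set M, X ⊆ Y → f Y ⊆ X → f X = f Y)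
    (hExp : ∀ X Y : Set M, f X ∩ f Y ⊆ f (X ∪ Y))
    (hClos : ∀ X : Set M, f X ⊆ f (ModSet sat (ThSet sat X)))
    (hKey : ∀ A : Set L, f (ModSet sat A) = ModSet sat (C A))
    (hCum : ∀ A B : Set L, A ⊆ B → B ⊆ C A → C A = C B) :
    ∀ A B : Set L,
      C {a | ∀ F : Set L, (A ⊆ F ∨ B ⊆ F) → a ∈ C F} ⊆ C (C A ∪ C B) := by
  intro A B
  set G := ThSet sat (ModSet sat A ∪ ModSet sat B) with hGdef
  have hModG : ModSet sat G = ModSet sat A ∪ ModSet sat B := hUnionDef A B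
  set D := {a | ∀ F : Set L, (A ⊆ F ∨ B ⊆ F) → a ∈ C F} with hDdef
  have hGD : G ⊆ D := by
    intro a ha F hF
    rw [hC]
    intro m hm
    have hmF : m ∈ ModSet sat F := hContr _ hm
    have hmAB : m ∈ ModSet sat A ∪ ModSet sat B := by
      rcases hF with h | h
      · exact Or.inl (fun x hx => hmF x (h hx))
      · exact Or.inr (fun x hx => hmF x (h hx))
    exact ha m hmAB
  have hModDG : ModSet sat D ⊆ ModSet sat G := fun m hm a ha => hm a (hGD ha)
  have hfG : f (ModSet sat G) ⊆ ModSet sat D := by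
    intro m hm a ha
    have hm' : m ∈ ModSet sat A ∪ ModSet sat B := by
      rw [← hModG]; exact hContr _ hm
    rcases hm' with h | h
    · have hmA : m ∈ f (ModSet sat A) := by
        refine hCoh (ModSet sat A) (ModSet sat G) ?_ ⟨hm, h⟩
        rw [hModG]; exact Set.subset_union_left
      have haA : a ∈ C A := ha A (Or.inl subset_rfl)
      rw [hC] at haA
      exact haA m hmA
    · have hmB : m ∈ f (ModSet sat B) := by
        refine hCoh (ModSet sat B) (ModSet sat G) ?_ ⟨hm, h⟩
        rw [hModG]; exact Set.subset_union_right
      have haB : a ∈ C B := ha B (Or.inr subset_rfl)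
      rw [hC] at haB
      exact haB m hmB
  have hEq : f (ModSet sat D) = f (ModSet sat G) :=
    hLocMon (ModSet sat D) (ModSet sat G) hModDG hfG
  intro a ha
  rw [hC] at ha ⊢
  intro m hm
  have hm1 : m ∈ ModSet sat (C A ∪ C B) := hContr _ hm
  have hm2 : m ∈ f (ModSet sat A) ∩ f (ModSet sat B) := by
    rw [hKey A, hKey B]
    constructor
    · intro x hx; exact hm1 x (Or.inl hx)
    · intro x hx; exact hm1 x (Or.inr hx)
  have hm3 : m ∈ f (ModSet sat A ∪ ModSet sat B) :=
    hExp (ModSet sat A) (ModSet sat B) hm2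
  have hm4 : m ∈ f (ModSet sat D) := by
    rw [hEq, hModG]; exact hm3
  exact ha m hm4
end

section
/- Let C : Set L → Set L satisfy Inclusion and Cumulativity, and let f, Mod, Th be the canonical construction. Then Th(Mod(A)) = ⋂{C(B) : B ⊆ L, B ⊇ A} for every A ⊆ L; that is, a formula holds in every C-theory containing A iff it belongs to C(B) for every superset B of A. -/
def CanonMod {L : Type*} (C : Set L → Set L) (A : Set L) : Set (Set L) :=
  {T | C T = T ∧ A ⊆ T}

def CanonTh {L : Type*} (X : Set (Set L)) : Set L :=
  {a | ∀ T ∈ X, a ∈ T}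

theorem canon_th_mod {L : Type*} (C : Set L → Set L)
    (hIncl : ∀ A : Set L, A ⊆ C A)
    (hIdem : ∀ A : Set L, C (C A) = C A)
    (hCum : ∀ A B : Set L, A ⊆ B → B ⊆ C A → C A = C B) :
    ∀ A : Set L,
      CanonTh (CanonMod C A) = {a | ∀ B : Set L, A ⊆ B → a ∈ C B} := by
  intro A
  ext a
  constructor
  · intro ha B hAB
    exact ha (C B) ⟨hIdem B, hAB.trans (hIncl B)⟩
  · intro ha T ⟨hT, hAT⟩
    simpa [hT] using ha T hAT
end
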